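/- arXiv:2201.11670 — 2 statements merged into one kernel-verified Lean document; each statement's English description precedes it below -/
import Mathlib

section
/- (Proposition 1(a)) Let X^n be distributed according to a memoryless source with p_X(x) > 0 for all x ∈ X (so p_{X^n}(x⃗) > 0 for all x⃗ ∈ X^n), independent of (K^n, M_A). If I(C^m; X^n | M_A) = 0 where C^m = Φ(K^n, X^n), then Δ_max-MI = 0: for every alternative plaintext distribution p̄ on X^n (with X̄^n ~ p̄ independent of (K^n, M_A)), I(C̄^m; X̄^n | M_A) = 0 where C̄^m = Φ(K^n, X̄^n). -/
open scoped BigOperators Classical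
open Real

noncomputable section

/-- A probability mass function on a finite type. -/
def IsPmf {Ω : Type*} [Fintype Ω] (μ : Ω → ℝ) : Prop :=
  (∀ ω, 0 ≤ μ ω) ∧ ∑ ω, μ ω = 1

/-- Probability of an event. -/
def pr {Ω : Type*} [Fintype Ω] (μ : Ω → ℝ) (E : Ω → Prop) : ℝ :=
  ∑ ω, if E ω then μ ω else 0

/-- Distribution of a random variable. -/
def dist {Ω A : Type*} [Fintype Ω] (μ : Ω → ℝ) (X : Ω → A) (a : A) : ℝ :=
  pr μ (fun ω => X ω = a)

/-- Shannon entropy (natural log) of a random variable. -/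
def ent {Ω A : Type*} [Fintype Ω] [Fintype A] (μ : Ω → ℝ) (X : Ω → A) : ℝ :=
  -∑ a, dist μ X a * Real.log (dist μ X a)

/-- Conditional entropy H(X|Y). -/
def condEnt {Ω A B : Type*} [Fintype Ω] [Fintype A] [Fintype B]
    (μ : Ω → ℝ) (X : Ω → A) (Y : Ω → B) : ℝ :=
  ent μ (fun ω => (X ω, Y ω)) - ent μ Y

/-- Mutual information I(X;Y). -/
def mutInfo {Ω A B : Type*} [Fintype Ω] [Fintype A] [Fintype B]
    (μ : Ω → ℝ) (X : Ω → A) (Y : Ω → B) : ℝ :=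
  ent μ X + ent μ Y - ent μ (fun ω => (X ω, Y ω))

/-- Conditional mutual information I(X;Y|Z). -/
def condMutInfo {Ω A B C : Type*} [Fintype Ω] [Fintype A] [Fintype B] [Fintype C]
    (μ : Ω → ℝ) (X : Ω → A) (Y : Ω → B) (Z : Ω → C) : ℝ :=
  ent μ (fun ω => (X ω, Z ω)) + ent μ (fun ω => (Y ω, Z ω))
    - ent μ (fun ω => (X ω, Y ω, Z ω)) - ent μ Z

/-- Independence of two random variables. -/
def Indep {Ω A B : Type*} [Fintype Ω] (μ : Ω → ℝ) (X : Ω → A) (Y : Ω → B) : Prop :=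
  ∀ a b, dist μ (fun ω => (X ω, Y ω)) (a, b) = dist μ X a * dist μ Y b

/-- Markov chain U → Z → K. -/
def Markov {Ω A B C : Type*} [Fintype Ω] (μ : Ω → ℝ)
    (U : Ω → A) (Z : Ω → B) (K : Ω → C) : Prop :=
  ∀ u z k, dist μ (fun ω => (U ω, Z ω, K ω)) (u, z, k) * dist μ Z z
    = dist μ (fun ω => (U ω, Z ω)) (u, z) * dist μ (fun ω => (Z ω, K ω)) (z, k)

/-!
Let `Γₓ(c, m) = Pr[Φ_K(x) = c, M_A = m]` be the channel seen by the plaintext `x`. For a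
nonnegative weight, `I(C; X | M_A) = 0` iff `C` and `X` are conditionally independent given
`M_A` (Gibbs' inequality, in the form `a log (a / q) - (a - q) = q · klFun (a / q) ≥ 0`). Under a
product source `ν ⊗ p` this independence reads `p(x) Γₓ = p(x) Γ̄ ρ / (Σ p · ρ)` with
`Γ̄ = Σ_y p(y) Γ_y` and `ρ` the law of `M_A`. If `p` has full support, `p(x)` cancels and `Γₓ`
does not depend on `x`; conversely, a channel independent of `x` makes the identity hold for
every source `p`.
-/

open Finset InformationTheory

section Marginals

variable {Ω A B : Type*} [Fintype Ω] {μ : Ω → ℝ}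

lemma pr_nonneg (hμ : ∀ ω, 0 ≤ μ ω) (E : Ω → Prop) : 0 ≤ pr μ E :=
  sum_nonneg fun ω _ => by split_ifs <;> simp [hμ ω]

lemma dist_le_dist_comp (hμ : ∀ ω, 0 ≤ μ ω) (W : Ω → A) (f : A → B) (a : A) :
    _root_.dist μ W a ≤ _root_.dist μ (fun ω => f (W ω)) (f a) :=
  sum_le_sum fun ω _ => by split_ifs with h h' <;> simp_all

variable (μ)

lemma sum_dist [Fintype A] (X : Ω → A) : ∑ a, _root_.dist μ X a = ∑ ω, μ ω := by
  simp only [_root_.dist, pr]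
  rw [sum_comm]
  simp

lemma sum_dist_pair_left [Fintype A] (X : Ω → A) (Y : Ω → B) (b : B) :
    ∑ a, _root_.dist μ (fun ω => (X ω, Y ω)) (a, b) = _root_.dist μ Y b := by
  simp only [_root_.dist, pr]
  rw [sum_comm]
  simp [Prod.ext_iff, ite_and]

lemma dist_comp_eq_sum [Fintype A] (W : Ω → A) (f : A → B) (b : B) :
    _root_.dist μ (fun ω => f (W ω)) b = ∑ a, if f a = b then _root_.dist μ W a else 0 := by
  simp only [_root_.dist, pr]
  conv_rhs => rw [← sum_filter]
  rw [sum_comm]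
  simp

lemma ent_comp [Fintype A] [Fintype B] (W : Ω → A) (f : A → B) :
    ent μ (fun ω => f (W ω)) =
      -∑ a, _root_.dist μ W a * log (_root_.dist μ (fun ω => f (W ω)) (f a)) := by
  rw [ent, neg_inj]
  simp_rw [dist_comp_eq_sum μ W f, sum_mul, ite_mul, zero_mul]
  rw [sum_comm]
  simp

end Marginals

lemma mul_log_sub_log_eq_mul_log_div {a b c r : ℝ} (ha : 0 ≤ a) (hab : a ≤ b) (hac : a ≤ c)
    (hbr : b ≤ r) : a * (log a + log r - log b - log c) = a * log (a / (b * c / r)) := by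
  rcases ha.eq_or_lt with rfl | ha
  · simp
  have hb : 0 < b := ha.trans_le hab
  have hc : 0 < c := ha.trans_le hac
  have hr : 0 < r := hb.trans_le hbr
  rw [log_div ha.ne' (by positivity), log_div (by positivity) hr.ne', log_mul hb.ne' hc.ne']
  ring

lemma mul_log_div_sub_eq_mul_klFun {a q : ℝ} (h : q = 0 → a = 0) :
    a * log (a / q) - (a - q) = q * klFun (a / q) := by
  rcases eq_or_ne q 0 with rfl | hq
  · simp [h rfl]
  rw [klFun_apply]
  field_simp
  ring

lemma eq_of_mul_klFun_div_eq_zero {a q : ℝ} (ha : 0 ≤ a) (hq : 0 ≤ q) (h : q = 0 → a = 0)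
    (h0 : q * klFun (a / q) = 0) : a = q := by
  rcases eq_or_ne q 0 with rfl | hq'
  · exact h rfl
  exact (div_eq_one_iff_eq hq').1
    ((klFun_eq_zero_iff (div_nonneg ha hq)).1 ((mul_eq_zero.1 h0).resolve_left hq'))

/-- Where `P(Z = c) = 0` the right side is `0` by the division convention, as is the left side
for a nonnegative `μ`. -/
def CondIndep {Ω A B C : Type*} [Fintype Ω] (μ : Ω → ℝ) (X : Ω → A) (Y : Ω → B) (Z : Ω → C) :
    Prop :=
  ∀ a b c, _root_.dist μ (fun ω => (X ω, Y ω, Z ω)) (a, b, c) =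
    _root_.dist μ (fun ω => (X ω, Z ω)) (a, c) * _root_.dist μ (fun ω => (Y ω, Z ω)) (b, c) /
      _root_.dist μ Z c

section CondMutInfo

variable {Ω A B C : Type*} [Fintype Ω] [Fintype A] [Fintype B] [Fintype C]
  (μ : Ω → ℝ) (X : Ω → A) (Y : Ω → B) (Z : Ω → C)

lemma condMutInfo_eq_sum :
    condMutInfo μ X Y Z = ∑ v, _root_.dist μ (fun ω => (X ω, Y ω, Z ω)) v *
      (log (_root_.dist μ (fun ω => (X ω, Y ω, Z ω)) v) + log (_root_.dist μ Z v.2.2)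
        - log (_root_.dist μ (fun ω => (X ω, Z ω)) (v.1, v.2.2))
        - log (_root_.dist μ (fun ω => (Y ω, Z ω)) v.2)) := by
  let W ω := (X ω, Y ω, Z ω)
  have hXZ : ent μ (fun ω => (X ω, Z ω)) = -∑ v, _root_.dist μ W v *
      log (_root_.dist μ (fun ω => (X ω, Z ω)) (v.1, v.2.2)) :=
    ent_comp μ W fun v => (v.1, v.2.2)
  have hYZ : ent μ (fun ω => (Y ω, Z ω)) = -∑ v, _root_.dist μ W v *
      log (_root_.dist μ (fun ω => (Y ω, Z ω)) v.2) :=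
    ent_comp μ W Prod.snd
  have hZ : ent μ Z = -∑ v, _root_.dist μ W v * log (_root_.dist μ Z v.2.2) :=
    ent_comp μ W fun v => v.2.2
  rw [condMutInfo, hXZ, hYZ, hZ, ent]
  simp only [mul_add, mul_sub, sum_add_distrib, sum_sub_distrib]
  ring

lemma sum_dist_mul_dist_div_dist :
    ∑ v : A × B × C, _root_.dist μ (fun ω => (X ω, Z ω)) (v.1, v.2.2) *
      _root_.dist μ (fun ω => (Y ω, Z ω)) v.2 / _root_.dist μ Z v.2.2 = ∑ ω, μ ω := by
  rw [← sum_dist μ Z, Fintype.sum_prod_type, sum_comm, Fintype.sum_prod_type, sum_comm]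
  refine sum_congr rfl fun c _ => ?_
  simp_rw [← sum_div, ← sum_mul, ← mul_sum]
  rw [sum_dist_pair_left, sum_dist_pair_left, mul_self_div_self]

theorem condMutInfo_eq_zero_of_condIndep (h : CondIndep μ X Y Z) : condMutInfo μ X Y Z = 0 := by
  rw [condMutInfo_eq_sum]
  refine sum_eq_zero fun ⟨a, b, c⟩ _ => ?_
  rw [h a b c]
  rcases eq_or_ne (_root_.dist μ (fun ω => (X ω, Z ω)) (a, c) *
    _root_.dist μ (fun ω => (Y ω, Z ω)) (b, c) / _root_.dist μ Z c) 0 with h0 | h0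
  · rw [h0, zero_mul]
  obtain ⟨⟨hXZ, hYZ⟩, hZ⟩ := div_ne_zero_iff.1 h0 |>.imp_left mul_ne_zero_iff.1
  rw [log_div (mul_ne_zero hXZ hYZ) hZ, log_mul hXZ hYZ]
  ring

theorem condIndep_of_condMutInfo_eq_zero (hμ : ∀ ω, 0 ≤ μ ω) (h : condMutInfo μ X Y Z = 0) :
    CondIndep μ X Y Z := by
  have hI := (condMutInfo_eq_sum μ X Y Z).symm.trans h
  have hP_sum := sum_dist μ (fun ω => (X ω, Y ω, Z ω))
  have hq_sum := sum_dist_mul_dist_div_dist μ X Y Z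
  set P := _root_.dist μ (fun ω => (X ω, Y ω, Z ω))
  set PXZ := _root_.dist μ (fun ω => (X ω, Z ω))
  set PYZ := _root_.dist μ (fun ω => (Y ω, Z ω))
  set PZ := _root_.dist μ Z
  set q : A × B × C → ℝ := fun v => PXZ (v.1, v.2.2) * PYZ v.2 / PZ v.2.2
  have hle : ∀ v : A × B × C, 0 ≤ P v ∧ P v ≤ PXZ (v.1, v.2.2) ∧ P v ≤ PYZ v.2 ∧
      PXZ (v.1, v.2.2) ≤ PZ v.2.2 := fun v =>
    ⟨pr_nonneg hμ _, dist_le_dist_comp hμ _ (fun v => (v.1, v.2.2)) v,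
      dist_le_dist_comp hμ _ Prod.snd v, dist_le_dist_comp hμ _ Prod.snd (v.1, v.2.2)⟩
  have hq0 : ∀ v, 0 ≤ q v := fun v => by
    obtain ⟨h0, h1, h2, h3⟩ := hle v
    exact div_nonneg (mul_nonneg (h0.trans h1) (h0.trans h2)) (h0.trans (h1.trans h3))
  have hqP : ∀ v, q v = 0 → P v = 0 := fun v hv => by
    obtain ⟨h0, h1, h2, h3⟩ := hle v
    rcases div_eq_zero_iff.1 hv with hv | hv
    · rcases mul_eq_zero.1 hv with hv | hv <;> linarith
    · linarith
  have hterm : ∀ v, q v * klFun (P v / q v) = P v * (log (P v) + log (PZ v.2.2)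
      - log (PXZ (v.1, v.2.2)) - log (PYZ v.2)) - (P v - q v) := fun v => by
    obtain ⟨h0, h1, h2, h3⟩ := hle v
    rw [mul_log_sub_log_eq_mul_log_div h0 h1 h2 h3, mul_log_div_sub_eq_mul_klFun (hqP v)]
  -- `∑ q = ∑ P`, so `I = ∑ q · klFun (P / q)`, a sum of nonnegative terms.
  have hsum : ∑ v, q v * klFun (P v / q v) = 0 := by
    rw [sum_congr rfl fun v _ => hterm v, sum_sub_distrib, hI, sum_sub_distrib, hP_sum, hq_sum]
    ring
  intro a b c
  show P (a, b, c) = q (a, b, c)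
  exact eq_of_mul_klFun_div_eq_zero (hle _).1 (hq0 _) (hqP _)
    ((sum_eq_zero_iff_of_nonneg fun v _ => mul_nonneg (hq0 v)
      (klFun_nonneg (div_nonneg (hle v).1 (hq0 v)))).1 hsum (a, b, c) (mem_univ _))

theorem condMutInfo_eq_zero_iff_condIndep (hμ : ∀ ω, 0 ≤ μ ω) :
    condMutInfo μ X Y Z = 0 ↔ CondIndep μ X Y Z :=
  ⟨condIndep_of_condMutInfo_eq_zero μ X Y Z hμ, condMutInfo_eq_zero_of_condIndep μ X Y Z⟩

end CondMutInfo

section ProductSource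

variable {Ω X C M : Type*} [Fintype Ω] [Fintype X] (ν : Ω → ℝ) (p : X → ℝ)

lemma dist_prod_eq_sum {D : Type*} (W : Ω → X → D) (d : D) :
    _root_.dist (fun w : Ω × X => ν w.1 * p w.2) (fun w => W w.1 w.2) d =
      ∑ x, p x * _root_.dist ν (fun ω => W ω x) d := by
  simp only [_root_.dist, pr]
  rw [Fintype.sum_prod_type, sum_comm]
  refine sum_congr rfl fun x _ => ?_
  rw [mul_sum]
  refine sum_congr rfl fun ω _ => ?_
  split_ifs <;> ring

def channel (F : Ω → X → C) (Z : Ω → M) (x : X) : C × M → ℝ :=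
  _root_.dist ν fun ω => (F ω x, Z ω)

variable (F : Ω → X → C) (Z : Ω → M)

lemma condIndep_prod_iff :
    CondIndep (fun w : Ω × X => ν w.1 * p w.2) (fun w => F w.1 w.2) (fun w => w.2)
        (fun w => Z w.1) ↔
      ∀ c x m, p x * channel ν F Z x (c, m) =
        (∑ y, p y * channel ν F Z y (c, m)) * (p x * _root_.dist ν Z m) /
          ((∑ y, p y) * _root_.dist ν Z m) := by
  have hCXZ : ∀ c x m, _root_.dist (fun w : Ω × X => ν w.1 * p w.2)
      (fun w => (F w.1 w.2, w.2, Z w.1)) (c, x, m) = p x * channel ν F Z x (c, m) := by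
    intro c x m
    rw [dist_prod_eq_sum ν p fun ω y => (F ω y, y, Z ω), sum_eq_single x]
    · simp [channel, _root_.dist, pr, Prod.ext_iff]
    · intro y _ hy
      simp [_root_.dist, pr, Prod.ext_iff, hy]
    · simp
  have hXZ : ∀ x m, _root_.dist (fun w : Ω × X => ν w.1 * p w.2) (fun w => (w.2, Z w.1)) (x, m) =
      p x * _root_.dist ν Z m := by
    intro x m
    rw [dist_prod_eq_sum ν p fun ω y => (y, Z ω), sum_eq_single x]
    · simp [_root_.dist, pr, Prod.ext_iff]
    · intro y _ hy
      simp [_root_.dist, pr, Prod.ext_iff, hy]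
    · simp
  have hCZ : ∀ c m, _root_.dist (fun w : Ω × X => ν w.1 * p w.2) (fun w => (F w.1 w.2, Z w.1))
      (c, m) = ∑ y, p y * channel ν F Z y (c, m) :=
    fun c m => dist_prod_eq_sum ν p (fun ω y => (F ω y, Z ω)) (c, m)
  have hZ : ∀ m, _root_.dist (fun w : Ω × X => ν w.1 * p w.2) (fun w => Z w.1) m =
      (∑ y, p y) * _root_.dist ν Z m := by
    intro m
    rw [dist_prod_eq_sum ν p fun ω _ => Z ω, sum_mul]
  simp only [CondIndep, hCXZ, hXZ, hCZ, hZ]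

lemma channel_eq_of_condIndep_prod (hp : ∀ x, 0 < p x)
    (h : CondIndep (fun w : Ω × X => ν w.1 * p w.2) (fun w => F w.1 w.2) (fun w => w.2)
      (fun w => Z w.1)) (x y : X) :
    channel ν F Z x = channel ν F Z y := by
  ext ⟨c, m⟩
  rw [condIndep_prod_iff] at h
  have hx : ∀ x, channel ν F Z x (c, m) = (∑ y, p y * channel ν F Z y (c, m)) *
      _root_.dist ν Z m / ((∑ y, p y) * _root_.dist ν Z m) := fun x =>
    mul_left_cancel₀ (hp x).ne' ((h c x m).trans (by ring))
  rw [hx x, hx y]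

lemma condIndep_prod_of_channel_eq (hν : ∀ ω, 0 ≤ ν ω) (hp : ∀ x, 0 ≤ p x)
    (h : ∀ x y, channel ν F Z x = channel ν F Z y) :
    CondIndep (fun w : Ω × X => ν w.1 * p w.2) (fun w => F w.1 w.2) (fun w => w.2)
      (fun w => Z w.1) := by
  rw [condIndep_prod_iff]
  intro c x m
  have hmix : ∑ y, p y * channel ν F Z y (c, m) = (∑ y, p y) * channel ν F Z x (c, m) := by
    simp_rw [h _ x, sum_mul]
  rw [hmix]
  rcases eq_or_ne ((∑ y, p y) * _root_.dist ν Z m) 0 with h0 | h0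
  · rw [h0, div_zero]
    rcases mul_eq_zero.1 h0 with hS | hρ
    · rw [(sum_eq_zero_iff_of_nonneg fun y _ => hp y).1 hS x (mem_univ x), zero_mul]
    · have : channel ν F Z x (c, m) = 0 :=
        le_antisymm (hρ ▸ dist_le_dist_comp hν _ Prod.snd (c, m)) (pr_nonneg hν _)
      rw [this, mul_zero]
  · rw [eq_div_iff h0]
    ring

end ProductSource

theorem stmt8_general {Ω₀ 𝒦 ℳ 𝒳 𝒞 : Type*} {n : ℕ}
    [Fintype Ω₀] [Fintype ℳ] [Fintype 𝒳] [Fintype 𝒞]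
    (ν : Ω₀ → ℝ) (hν : IsPmf ν) (K : Ω₀ → 𝒦) (M : Ω₀ → ℳ)
    (Φ : 𝒦 → (Fin n → 𝒳) → 𝒞)
    (pX : 𝒳 → ℝ) (hpos : ∀ x, 0 < pX x)
    (h0 : condMutInfo (fun w : Ω₀ × (Fin n → 𝒳) => ν w.1 * ∏ i, pX (w.2 i))
        (fun w => Φ (K w.1) w.2) (fun w => w.2) (fun w => M w.1) = 0) :
    ∀ p : (Fin n → 𝒳) → ℝ, IsPmf p →
      condMutInfo (fun w : Ω₀ × (Fin n → 𝒳) => ν w.1 * p w.2)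
        (fun w => Φ (K w.1) w.2) (fun w => w.2) (fun w => M w.1) = 0 := by
  intro p hp
  have hp₀ : ∀ x : Fin n → 𝒳, 0 < ∏ i, pX (x i) := fun x => prod_pos fun i _ => hpos (x i)
  have hμ : ∀ q : (Fin n → 𝒳) → ℝ, (∀ x, 0 ≤ q x) →
      ∀ w : Ω₀ × (Fin n → 𝒳), 0 ≤ ν w.1 * q w.2 := fun q hq w => mul_nonneg (hν.1 _) (hq _)
  rw [condMutInfo_eq_zero_iff_condIndep _ _ _ _ (hμ _ fun x => (hp₀ x).le)] at h0
  rw [condMutInfo_eq_zero_iff_condIndep _ _ _ _ (hμ p hp.1)]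
  exact condIndep_prod_of_channel_eq ν p (fun ω x => Φ (K ω) x) M hν.1 hp.1
    (channel_eq_of_condIndep_prod ν _ _ _ hp₀ h0)

/-- Proposition 1(a): Let the plaintext `Xⁿ` be i.i.d. with per-letter
distribution `pX` having full support, adjoined independently of `(Kⁿ, M_A)` (product
measure).  If `I(Cᵐ; Xⁿ | M_A) = 0` for `Cᵐ = Φ(Kⁿ, Xⁿ)`, then for every alternative
plaintext distribution `p̄` on `𝒳ⁿ` we also have `I(C̄ᵐ; X̄ⁿ | M_A) = 0`,
i.e. `Δ_max-MI = 0`. -/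
theorem stmt8 {Ω₀ 𝒦 ℳ 𝒳 𝒞 : Type*} {n : ℕ}
    [Fintype Ω₀] [Fintype 𝒦] [Fintype ℳ] [Fintype 𝒳] [Fintype 𝒞]
    (ν : Ω₀ → ℝ) (hν : IsPmf ν) (K : Ω₀ → 𝒦) (M : Ω₀ → ℳ)
    (Φ : 𝒦 → (Fin n → 𝒳) → 𝒞)
    (pX : 𝒳 → ℝ) (hpX : IsPmf pX) (hpos : ∀ x, 0 < pX x)
    (h0 : condMutInfo (fun w : Ω₀ × (Fin n → 𝒳) => ν w.1 * ∏ i, pX (w.2 i))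
        (fun w => Φ (K w.1) w.2) (fun w => w.2) (fun w => M w.1) = 0) :
    ∀ p : (Fin n → 𝒳) → ℝ, IsPmf p →
      condMutInfo (fun w : Ω₀ × (Fin n → 𝒳) => ν w.1 * p w.2)
        (fun w => Φ (K w.1) w.2) (fun w => w.2) (fun w => M w.1) = 0 :=
  stmt8_general ν hν K M Φ pX hpos h0
end
end

section
/- (Strong converse via source coding) If R < H(X) for a discrete memoryless source with per-letter distribution p_X, then for every τ ∈ (0,1) and every sequence of codes (φ^{(n)}, ψ^{(n)}) with encoder φ^{(n)} : X^n → X^{m} and rate (m/n)log|X| ≤ R + γ for sufficiently small γ > 0, the decoding error probability Pr[ψ^{(n)}(φ^{(n)}(X^n)) ≠ X^n] ≥ 1 − τ for all sufficiently large n. -/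
open scoped BigOperators Classical
open Real

noncomputable section

/-!
Fix a code and let `S` be the set of source words it decodes correctly. Since `ψ ∘ φ` is the
identity on `S`, the set has at most `|𝒳|^m ≤ exp(n(R + δ))` elements. Words of probability at
most `exp(-n(H - δ))` therefore carry total mass at most `exp(-n(H - R - 2δ))`, while words of
larger probability have empirical information `-(1/n) log P(x)` below `H - δ`, which by
Chebyshev's inequality for the i.i.d. sum of `-log p(xᵢ)` has probability `O(1/n)`.
-/

open Finset Filter Topology

def shannonEntropy {α : Type*} [Fintype α] (p : α → ℝ) : ℝ :=
  -∑ a, p a * log (p a)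

def varentropy {α : Type*} [Fintype α] (p : α → ℝ) : ℝ :=
  ∑ a, p a * (-log (p a) - shannonEntropy p) ^ 2

section ProductDistribution

variable {ι α : Type*} [Fintype ι] [DecidableEq ι] [Fintype α] {p : α → ℝ}

theorem sum_prod_eq_one (hp : ∑ a, p a = 1) : ∑ x : ι → α, ∏ i, p (x i) = 1 := by
  rw [← Fintype.prod_sum]
  simp [hp]

theorem sum_prod_mul_prod_eq_prod_sum (hp : ∑ a, p a = 1) (s : Finset ι) (g : ι → α → ℝ) :
    ∑ x : ι → α, (∏ i, p (x i)) * ∏ i ∈ s, g i (x i) = ∏ i ∈ s, ∑ a, p a * g i a := by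
  have hfactor : ∀ i, (∑ a, p a * if i ∈ s then g i a else 1) =
      if i ∈ s then ∑ a, p a * g i a else 1 := by
    intro i
    split_ifs <;> simp [hp]
  calc ∑ x : ι → α, (∏ i, p (x i)) * ∏ i ∈ s, g i (x i)
      = ∑ x : ι → α, ∏ i, p (x i) * if i ∈ s then g i (x i) else 1 := by
        refine sum_congr rfl fun x _ => ?_
        rw [prod_mul_distrib, Fintype.prod_ite_mem]
    _ = ∏ i, ∑ a, p a * if i ∈ s then g i a else 1 :=
        (Fintype.prod_sum fun i a => p a * if i ∈ s then g i a else 1).symm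
    _ = ∏ i ∈ s, ∑ a, p a * g i a := by simp only [hfactor, Fintype.prod_ite_mem]

theorem sum_prod_mul_sum_sq (hp : ∑ a, p a = 1) {c : α → ℝ} (hc : ∑ a, p a * c a = 0) :
    ∑ x : ι → α, (∏ i, p (x i)) * (∑ i, c (x i)) ^ 2 =
      Fintype.card ι * ∑ a, p a * c a ^ 2 := by
  have hcov : ∀ i j : ι, ∑ x : ι → α, (∏ k, p (x k)) * (c (x i) * c (x j)) =
      if i = j then ∑ a, p a * c a ^ 2 else 0 := by
    intro i j
    split_ifs with hij
    · subst hij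
      simpa [← sq] using sum_prod_mul_prod_eq_prod_sum hp {i} (fun _ a => c a ^ 2)
    · simpa [prod_pair hij, hc] using sum_prod_mul_prod_eq_prod_sum hp {i, j} (fun _ => c)
  calc ∑ x : ι → α, (∏ i, p (x i)) * (∑ i, c (x i)) ^ 2
      = ∑ x : ι → α, ∑ i, ∑ j, (∏ k, p (x k)) * (c (x i) * c (x j)) := by
        refine sum_congr rfl fun x _ => ?_
        rw [sq, sum_mul_sum, mul_sum]
        simp only [mul_sum]
    _ = ∑ i, ∑ j, ∑ x : ι → α, (∏ k, p (x k)) * (c (x i) * c (x j)) := by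
        rw [sum_comm]
        exact sum_congr rfl fun i _ => sum_comm
    _ = Fintype.card ι * ∑ a, p a * c a ^ 2 := by simp [hcov]

end ProductDistribution

theorem sum_filter_le_abs_le_sum_mul_sq_div {β : Type*} [Fintype β] {w : β → ℝ} (hw : ∀ x, 0 ≤ w x)
    (Y : β → ℝ) {t : ℝ} (ht : 0 < t) :
    ∑ x with t ≤ |Y x|, w x ≤ (∑ x, w x * Y x ^ 2) / t ^ 2 := by
  rw [le_div_iff₀ (by positivity), sum_mul]
  calc ∑ x with t ≤ |Y x|, w x * t ^ 2 ≤ ∑ x with t ≤ |Y x|, w x * Y x ^ 2 := by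
        refine sum_le_sum fun x hx => mul_le_mul_of_nonneg_left ?_ (hw x)
        simpa [sq_abs] using pow_le_pow_left₀ ht.le (mem_filter.1 hx).2 2
    _ ≤ ∑ x, w x * Y x ^ 2 :=
        sum_le_sum_of_subset_of_nonneg (filter_subset _ _) fun x _ _ =>
          mul_nonneg (hw x) (sq_nonneg _)

theorem sum_le_card_mul_add_sum_filter_lt {β : Type*} [Fintype β] {w : β → ℝ}
    (hw : ∀ x, 0 ≤ w x) (s : Finset β) {θ : ℝ} (hθ : 0 ≤ θ) :
    ∑ x ∈ s, w x ≤ #s * θ + ∑ x with θ < w x, w x := by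
  rw [← sum_filter_not_add_sum_filter s (fun x => θ < w x)]
  gcongr ?_ + ?_
  · calc ∑ x ∈ s with ¬θ < w x, w x ≤ #(s.filter fun x => ¬θ < w x) • θ :=
          sum_le_card_nsmul _ _ _ fun x hx => not_lt.1 (mem_filter.1 hx).2
      _ ≤ #s * θ := by
          rw [nsmul_eq_mul]
          gcongr
          exact filter_subset _ _
  · exact sum_le_sum_of_subset_of_nonneg (filter_subset_filter _ (subset_univ s))
      fun x _ _ => hw x

theorem card_filter_apply_apply_eq_le {β γ : Type*} [Fintype β] [Fintype γ] [DecidableEq β]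
    (φ : β → γ) (ψ : γ → β) : #{x | ψ (φ x) = x} ≤ Fintype.card γ :=
  calc #{x | ψ (φ x) = x} ≤ #(univ.image ψ) := card_le_card fun x hx =>
        mem_image.2 ⟨φ x, mem_univ _, (mem_filter.1 hx).2⟩
    _ ≤ Fintype.card γ := card_image_le

theorem sum_neg_log_lt_of_exp_neg_lt_prod {ι : Type*} [Fintype ι] {q : ι → ℝ} {b : ℝ}
    (h : exp (-b) < ∏ i, q i) : ∑ i, -log (q i) < b := by
  have hpos : 0 < ∏ i, q i := (exp_pos _).trans h
  have hne : ∀ i ∈ univ, q i ≠ 0 := fun i _ hi => hpos.ne' (prod_eq_zero (mem_univ i) hi)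
  rw [sum_neg_distrib, ← log_prod hne, neg_lt]
  exact (lt_log_iff_exp_lt hpos).2 h

theorem natCast_pow_le_exp_of_div_mul_log_le {k m n : ℕ} (hk : 0 < k) (hn : 0 < n) {r : ℝ}
    (h : (m : ℝ) / n * log k ≤ r) : (k : ℝ) ^ m ≤ exp (n * r) := by
  rw [div_mul_eq_mul_div, div_le_iff₀ (by positivity), mul_comm r] at h
  calc (k : ℝ) ^ m = exp (m * log k) := by
        rw [← log_pow, exp_log (by positivity)]
    _ ≤ exp (n * r) := exp_le_exp.2 h

theorem tendsto_exp_neg_mul_add_div_mul_sq {δ : ℝ} (hδ : 0 < δ) (V : ℝ) :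
    Tendsto (fun n : ℕ => exp (-(n * δ)) + V / (n * δ ^ 2)) atTop (𝓝 0) := by
  have hexp := tendsto_exp_neg_atTop_nhds_zero.comp
    (tendsto_natCast_atTop_atTop.atTop_mul_const hδ)
  have hdiv := (tendsto_const_div_atTop_nhds_zero_nat (V / δ ^ 2)).congr
    fun n => (div_div _ _ _).trans (by rw [mul_comm])
  simpa using hexp.add hdiv

section Decoding

variable {α β : Type*} [Fintype α] {p : α → ℝ} {n : ℕ}

def correctDecodingProb (p : α → ℝ) (φ : (Fin n → α) → β) (ψ : β → Fin n → α) : ℝ :=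
  ∑ x with ψ (φ x) = x, ∏ i, p (x i)

theorem sum_ite_ne_eq_one_sub_correctDecodingProb (hp : IsPmf p) (φ : (Fin n → α) → β)
    (ψ : β → Fin n → α) :
    ∑ x : Fin n → α, (if ψ (φ x) ≠ x then ∏ i, p (x i) else 0) =
      1 - correctDecodingProb p φ ψ := by
  rw [← sum_filter, ← sum_prod_eq_one (ι := Fin n) hp.2, correctDecodingProb,
    ← sum_filter_add_sum_filter_not univ fun x => ψ (φ x) = x]
  ring

theorem correctDecodingProb_le [Fintype β] (hp : IsPmf p) (hn : 0 < n) (φ : (Fin n → α) → β)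
    (ψ : β → Fin n → α) {δ : ℝ} (hδ : 0 < δ) :
    correctDecodingProb p φ ψ ≤
      Fintype.card β * exp (-(n * (shannonEntropy p - δ))) + varentropy p / (n * δ ^ 2) := by
  set H := shannonEntropy p
  set θ := exp (-(n * (H - δ)))
  set c : α → ℝ := fun a => -log (p a) - H
  have hP : ∀ x : Fin n → α, 0 ≤ ∏ i, p (x i) := fun x => prod_nonneg fun i _ => hp.1 (x i)
  have hc : ∑ a, p a * c a = 0 := by
    simp only [c, mul_sub, sum_sub_distrib, ← sum_mul, hp.2, one_mul, H, shannonEntropy,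
      mul_neg, sum_neg_distrib, sub_self]
  have hV : ∑ a, p a * c a ^ 2 = varentropy p := rfl
  have hlikely : ∀ x : Fin n → α, θ < ∏ i, p (x i) → n * δ ≤ |∑ i, c (x i)| := by
    intro x hx
    have hlog := sum_neg_log_lt_of_exp_neg_lt_prod hx
    have hsum : ∑ i, c (x i) = ∑ i, -log (p (x i)) - n * H := by
      simp [c, sum_sub_distrib]
    linarith [neg_abs_le (∑ i, c (x i))]
  calc correctDecodingProb p φ ψ
      ≤ #{x | ψ (φ x) = x} * θ + ∑ x : Fin n → α with θ < ∏ i, p (x i), ∏ i, p (x i) :=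
        sum_le_card_mul_add_sum_filter_lt hP _ (exp_pos _).le
    _ ≤ Fintype.card β * θ + ∑ x : Fin n → α with n * δ ≤ |∑ i, c (x i)|, ∏ i, p (x i) := by
        refine add_le_add ?_ ?_
        · gcongr
          exact_mod_cast card_filter_apply_apply_eq_le φ ψ
        · exact sum_le_sum_of_subset_of_nonneg (monotone_filter_right _ fun x _ => hlikely x)
            fun x _ _ => hP x
    _ ≤ Fintype.card β * θ +
          (∑ x : Fin n → α, (∏ i, p (x i)) * (∑ i, c (x i)) ^ 2) / (n * δ) ^ 2 := by
        gcongr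
        exact sum_filter_le_abs_le_sum_mul_sq_div hP _ (by positivity)
    _ = Fintype.card β * θ + varentropy p / (n * δ ^ 2) := by
        rw [sum_prod_mul_sum_sq hp.2 hc, Fintype.card_fin, hV]
        field_simp

theorem correctDecodingProb_le_of_rate (hp : IsPmf p) (hn : 0 < n) {m : ℕ}
    (φ : (Fin n → α) → Fin m → α) (ψ : (Fin m → α) → Fin n → α) {R δ : ℝ} (hδ : 0 < δ)
    (hrate : (m : ℝ) / n * log (Fintype.card α) ≤ R + δ) :
    correctDecodingProb p φ ψ ≤
      exp (-(n * (shannonEntropy p - R - 2 * δ))) + varentropy p / (n * δ ^ 2) := by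
  obtain ⟨a, -⟩ := exists_ne_zero_of_sum_ne_zero (hp.2 ▸ one_ne_zero : ∑ a, p a ≠ 0)
  have hcode : (Fintype.card (Fin m → α) : ℝ) ≤ exp (n * (R + δ)) := by
    rw [Fintype.card_fun, Fintype.card_fin, Nat.cast_pow]
    exact natCast_pow_le_exp_of_div_mul_log_le (Fintype.card_pos_iff.2 ⟨a⟩) hn hrate
  calc correctDecodingProb p φ ψ
      ≤ Fintype.card (Fin m → α) * exp (-(n * (shannonEntropy p - δ))) +
          varentropy p / (n * δ ^ 2) := correctDecodingProb_le hp hn φ ψ hδ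
    _ ≤ exp (n * (R + δ)) * exp (-(n * (shannonEntropy p - δ))) +
          varentropy p / (n * δ ^ 2) := by gcongr
    _ = exp (-(n * (shannonEntropy p - R - 2 * δ))) + varentropy p / (n * δ ^ 2) := by
        rw [← exp_add]
        ring_nf

end Decoding

/-- Strong converse for source coding: If `R < H(X)` for a discrete
memoryless source with per-letter distribution `pX`, then for every `τ ∈ (0,1)` there is
`γ > 0` such that every sequence of fixed-length codes `(φ⁽ⁿ⁾, ψ⁽ⁿ⁾)` of rate
`(m/n)·log|𝒳| ≤ R + γ` has decoding error probability at least `1 − τ` for all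
sufficiently large `n`. -/
theorem stmt18 {𝒳 : Type*} [Fintype 𝒳]
    (pX : 𝒳 → ℝ) (hpX : IsPmf pX)
    (R : ℝ) (hR : R < -∑ x, pX x * Real.log (pX x)) :
    ∀ τ ∈ Set.Ioo (0 : ℝ) 1, ∃ γ > (0 : ℝ),
      ∀ (m : ℕ → ℕ)
        (φ : ∀ n, (Fin n → 𝒳) → (Fin (m n) → 𝒳))
        (ψ : ∀ n, (Fin (m n) → 𝒳) → (Fin n → 𝒳)),
        (∀ n, 1 ≤ n → (m n : ℝ) / n * Real.log (Fintype.card 𝒳) ≤ R + γ) →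
        ∃ N, ∀ n ≥ N,
          1 - τ ≤ ∑ x : Fin n → 𝒳,
            (if ψ n (φ n x) ≠ x then ∏ i, pX (x i) else 0) := by
  intro τ hτ
  obtain ⟨δ, hδ, hgap⟩ : ∃ δ > 0, shannonEntropy pX - R - 2 * δ = δ :=
    ⟨(shannonEntropy pX - R) / 3, by rw [shannonEntropy]; linarith, by ring⟩
  refine ⟨δ, hδ, fun m φ ψ hrate => ?_⟩
  obtain ⟨N, hN⟩ := eventually_atTop.1
    (((tendsto_exp_neg_mul_add_div_mul_sq hδ (varentropy pX)).eventually (gt_mem_nhds hτ.1)).and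
      (eventually_ge_atTop 1))
  refine ⟨N, fun n hn => ?_⟩
  obtain ⟨hsmall, hn⟩ := hN n hn
  have hcorrect := correctDecodingProb_le_of_rate hpX hn (φ n) (ψ n) hδ (hrate n hn)
  rw [hgap] at hcorrect
  rw [sum_ite_ne_eq_one_sub_correctDecodingProb hpX]
  linarith
end
end
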